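/- arXiv:2104.06741 — 5 statements merged into one kernel-verified Lean document; each statement's English description precedes it below -/
import Mathlib

section
/- Fix a prime p and natural numbers n, m ≥ 1, and let f_1,…,f_n, g_1,…,g_n ∈ 𝔽̄_p[x_1,…,x_m] be polynomials with coefficients in 𝔽̄_p. Let A_p = 𝔽̄_p[t^{1/p^∞}]/(t^{p−1}). Then the system f_1(x) = … = f_n(x) = 0, g_1(x) ≠ 0, …, g_n(x) ≠ 0 has a solution x ∈ A_p^m if and only if there exists x ∈ (𝔽̄_p[[t]])^m (an m-tuple of formal power series over 𝔽̄_p) such that ord(f_i(x)) > ord(g_j(x)) for all 1 ≤ i, j ≤ n, where ord denotes the t-adic order of a power series (with ord(0) = ∞). -/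
noncomputable section

/-- The ring hom `R[X]/(X^a) →+* R[X]/(X^b)` induced by `X ↦ X^k`, well defined when
`b ≤ a * k`. -/
noncomputable def powQuotMap (R : Type*) [CommRing R] (a b k : ℕ) (h : b ≤ a * k) :
    (Polynomial R ⧸ Ideal.span {(Polynomial.X : Polynomial R) ^ a}) →+*
      (Polynomial R ⧸ Ideal.span {(Polynomial.X : Polynomial R) ^ b}) :=
  Ideal.Quotient.lift _
    ((Ideal.Quotient.mk _).comp (Polynomial.eval₂RingHom Polynomial.C (Polynomial.X ^ k)))
    (fun f hf => by
      rw [Ideal.mem_span_singleton] at hf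
      obtain ⟨g, rfl⟩ := hf
      simp only [RingHom.comp_apply, Polynomial.coe_eval₂RingHom, Polynomial.eval₂_mul,
        Polynomial.eval₂_pow, Polynomial.eval₂_X]
      rw [← pow_mul, Ideal.Quotient.eq_zero_iff_mem]
      exact Ideal.mul_mem_right _ _
        (Ideal.mem_span_singleton.2 (pow_dvd_pow _ (le_trans h (le_of_eq (mul_comm a k))))))

/-- `R[t^{1/p^∞}]/(t^{p-1})`: the direct limit over `n : ℕ` of the rings
`R[X]/(X^{p^n(p-1)})`, with transition maps induced by `X ↦ X^p`
(from stage `n` to stage `m` the map is induced by `X ↦ X^{p^{m-n}}`). -/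
noncomputable abbrev PerfQuot (R : Type*) [CommRing R] (p : ℕ) : Type _ :=
  Ring.DirectLimit
    (fun n : ℕ => Polynomial R ⧸ Ideal.span {(Polynomial.X : Polynomial R) ^ (p ^ n * (p - 1))})
    (fun n m hnm => powQuotMap R (p ^ n * (p - 1)) (p ^ m * (p - 1)) (p ^ (m - n))
      (le_of_eq (by rw [mul_right_comm, ← pow_add, Nat.add_sub_cancel' hnm])))

/-- The canonical ring hom `R →+* R[t^{1/p^∞}]/(t^{p-1})` (constants, via stage `0`). -/
noncomputable def toPerfQuot (R : Type*) [CommRing R] (p : ℕ) : R →+* PerfQuot R p :=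
  (Ring.DirectLimit.of _ _ 0).comp ((Ideal.Quotient.mk _).comp Polynomial.C)

/-!
An element of `A_p` is represented at a finite stage `N` by a power series `y` read modulo
`X ^ (p ^ N * (p - 1))`, and since the transition maps `X ↦ X ^ p` are injective it vanishes
exactly when `ord y ≥ p ^ N * (p - 1)`. So a solution in `A_p ^ m` is a tuple of power series
with `ord (f i) ≥ L > ord (g j)` for a threshold `L = p ^ N * (p - 1)`. Conversely, if
`ord (g j) ≤ γ < ord (f i)`, substituting `X ↦ X ^ a` multiplies all orders by `a`, and for
`L > γ²` some `a` satisfies `a * γ < L ≤ a * (γ + 1)`.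
-/

theorem Nat.exists_mul_lt_le_mul_succ {γ L : ℕ} (h : γ * γ < L) :
    ∃ a, 0 < a ∧ a * γ < L ∧ L ≤ a * (γ + 1) := by
  have hdiv := Nat.div_add_mod (L + γ) (γ + 1)
  have hmod := Nat.mod_lt (L + γ) γ.succ_pos
  generalize (L + γ) / (γ + 1) = a at hdiv
  generalize (L + γ) % (γ + 1) = r at hdiv hmod
  have hle : L ≤ a * (γ + 1) := by nlinarith
  refine ⟨a, Nat.pos_of_ne_zero fun ha => ?_, ?_, hle⟩
  · rw [ha, zero_mul] at hle
    omega
  · by_contra hge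
    have hau : a ≤ γ := by nlinarith
    nlinarith [Nat.mul_le_mul_right γ hau]

theorem ENat.exists_nat_between {ι : Type*} [Finite ι] {a b : ι → ℕ∞}
    (h : ∀ i j, a j < b i) :
    ∃ γ : ℕ, (∀ j, a j ≤ γ) ∧ ∀ i, (γ : ℕ∞) < b i := by
  cases nonempty_fintype ι
  have hsup : Finset.univ.sup a < ⊤ :=
    (Finset.sup_lt_iff bot_lt_top).2 fun j _ => (h j j).trans_le le_top
  refine ⟨(Finset.univ.sup a).toNat, fun j => ?_, fun i => ?_⟩ <;>
    rw [ENat.natCast_toNat hsup.ne]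
  · exact Finset.le_sup (Finset.mem_univ j)
  · exact (Finset.sup_lt_iff (bot_le.trans_lt (h i i))).2 fun j _ => h i j

namespace Polynomial

variable {R : Type*} [CommRing R]

theorem X_pow_dvd_of_X_pow_mul_dvd_expand {a k : ℕ} (hk : 0 < k) {P : R[X]}
    (h : X ^ (a * k) ∣ expand R k P) : X ^ a ∣ P := by
  rw [X_pow_dvd_iff] at h ⊢
  intro d hd
  rw [← coeff_expand_mul hk]
  exact h _ (Nat.mul_lt_mul_of_pos_right hd hk)

end Polynomial

namespace PowerSeries

variable {R : Type*} [CommRing R]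

theorem X_pow_dvd_iff_le_order {n : ℕ} {φ : PowerSeries R} :
    X ^ n ∣ φ ↔ (n : ℕ∞) ≤ φ.order := by
  rw [order_eq_emultiplicity_X]
  exact pow_dvd_iff_le_emultiplicity

theorem mk_trunc_coe (n : ℕ) (P : Polynomial R) :
    Ideal.Quotient.mk (Ideal.span {(Polynomial.X : Polynomial R) ^ n})
        (trunc n (P : PowerSeries R)) =
      Ideal.Quotient.mk _ P := by
  refine Ideal.Quotient.eq.2 (Ideal.mem_span_singleton.2 (Polynomial.X_pow_dvd_iff.2 ?_))
  intro d hd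
  rw [Polynomial.coeff_sub, coeff_trunc, if_pos hd, Polynomial.coeff_coe, sub_self]

noncomputable def truncQuotient (n : ℕ) :
    PowerSeries R →+* Polynomial R ⧸ Ideal.span {(Polynomial.X : Polynomial R) ^ n} where
  toFun φ := Ideal.Quotient.mk _ (trunc n φ)
  map_one' := by rw [← Polynomial.coe_one, mk_trunc_coe, map_one]
  map_mul' φ ψ := by
    rw [← trunc_trunc_mul_trunc, ← Polynomial.coe_mul, mk_trunc_coe, map_mul]
  map_zero' := by rw [map_zero, map_zero]
  map_add' φ ψ := by rw [map_add, map_add]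

theorem truncQuotient_coe (n : ℕ) (P : Polynomial R) :
    truncQuotient n (P : PowerSeries R) = Ideal.Quotient.mk _ P :=
  mk_trunc_coe n P

theorem truncQuotient_surjective (n : ℕ) : Function.Surjective (truncQuotient (R := R) n) := by
  intro q
  obtain ⟨P, rfl⟩ := Ideal.Quotient.mk_surjective q
  exact ⟨P, truncQuotient_coe n P⟩

theorem truncQuotient_eq_zero_iff {n : ℕ} {φ : PowerSeries R} :
    truncQuotient n φ = 0 ↔ (n : ℕ∞) ≤ φ.order := by
  change Ideal.Quotient.mk _ _ = 0 ↔ _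
  rw [Ideal.Quotient.eq_zero_iff_mem, Ideal.mem_span_singleton, Polynomial.X_pow_dvd_iff,
    ← X_pow_dvd_iff_le_order, X_pow_dvd_iff]
  refine forall₂_congr fun d hd => ?_
  rw [coeff_trunc, if_pos hd]

theorem eval₂_expand {σ : Type*} (a : ℕ) (ha : a ≠ 0)
    (y : σ → PowerSeries R) (F : MvPolynomial σ R) :
    MvPolynomial.eval₂ C (fun k => expand a ha (y k)) F =
      expand a ha (MvPolynomial.eval₂ C y F) := by
  rw [← AlgHom.coe_toRingHom, MvPolynomial.eval₂_comp_left]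
  congr 1
  exact (RingHom.ext (expand_C a ha)).symm

end PowerSeries

section

open Polynomial

variable (R : Type*) [CommRing R]

theorem powQuotMap_mk (a b k : ℕ) (h : b ≤ a * k) (P : R[X]) :
    powQuotMap R a b k h (Ideal.Quotient.mk _ P) = Ideal.Quotient.mk _ (expand R k P) := rfl

theorem powQuotMap_injective {a b k : ℕ} (h : b ≤ a * k) (hk : 0 < k) (hb : a * k ≤ b) :
    Function.Injective (powQuotMap R a b k h) := by
  refine (injective_iff_map_eq_zero _).2 fun q hq => ?_
  obtain ⟨P, rfl⟩ := Ideal.Quotient.mk_surjective q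
  rw [powQuotMap_mk, Ideal.Quotient.eq_zero_iff_mem, Ideal.mem_span_singleton] at hq
  rw [Ideal.Quotient.eq_zero_iff_mem, Ideal.mem_span_singleton]
  exact X_pow_dvd_of_X_pow_mul_dvd_expand hk ((pow_dvd_pow X hb).trans hq)

end

namespace PerfQuot

open Polynomial

variable (R : Type*) [CommRing R] (p : ℕ)

instance directedSystem :
    DirectedSystem (fun n : ℕ => R[X] ⧸ Ideal.span {(X : R[X]) ^ (p ^ n * (p - 1))})
      (fun n m hnm => ⇑(powQuotMap R (p ^ n * (p - 1)) (p ^ m * (p - 1)) (p ^ (m - n))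
        (le_of_eq (by rw [mul_right_comm, ← pow_add, Nat.add_sub_cancel' hnm])))) where
  map_self i q := by
    obtain ⟨P, rfl⟩ := Ideal.Quotient.mk_surjective q
    rw [powQuotMap_mk, Nat.sub_self, pow_zero, expand_one]
  map_map {k j i} hij hjk q := by
    obtain ⟨P, rfl⟩ := Ideal.Quotient.mk_surjective q
    rw [powQuotMap_mk, powQuotMap_mk, powQuotMap_mk, expand_expand, ← pow_add,
      Nat.sub_add_sub_cancel hjk hij]

/-- A power series read at stage `N`, so that `X` becomes `t ^ (1 / p ^ N)`. -/
noncomputable def ofPowerSeries (N : ℕ) : PowerSeries R →+* PerfQuot R p :=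
  (Ring.DirectLimit.of _ _ N).comp (PowerSeries.truncQuotient _)

theorem ofPowerSeries_eq_zero_iff (hp : 0 < p) {N : ℕ} {φ : PowerSeries R} :
    ofPowerSeries R p N φ = 0 ↔ ((p ^ N * (p - 1) : ℕ) : ℕ∞) ≤ φ.order := by
  rw [← PowerSeries.truncQuotient_eq_zero_iff, ofPowerSeries, RingHom.comp_apply]
  refine map_eq_zero_iff _ (Ring.DirectLimit.of_injective _ (fun i j hij => ?_) N)
  exact powQuotMap_injective R _ (pow_pos hp _)
    (by rw [mul_right_comm, ← pow_add, Nat.add_sub_cancel' hij])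

theorem ofPowerSeries_comp_C (N : ℕ) :
    (ofPowerSeries R p N).comp PowerSeries.C = toPerfQuot R p := by
  ext r
  have h := Ring.DirectLimit.of_f
    (f := fun n m hnm => powQuotMap R (p ^ n * (p - 1)) (p ^ m * (p - 1)) (p ^ (m - n))
        (le_of_eq (by rw [mul_right_comm, ← pow_add, Nat.add_sub_cancel' hnm])))
    (Nat.zero_le N) (Ideal.Quotient.mk _ (C r))
  rw [powQuotMap_mk, expand_C] at h
  rw [RingHom.comp_apply, ofPowerSeries, RingHom.comp_apply, ← Polynomial.coe_C,
    PowerSeries.truncQuotient_coe, h]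
  rfl

theorem exists_ofPowerSeries_eq {σ : Type*} [Finite σ] (x : σ → PerfQuot R p) :
    ∃ (N : ℕ) (y : σ → PowerSeries R), ∀ k, ofPowerSeries R p N (y k) = x k := by
  choose i q hq using fun k => Ring.DirectLimit.exists_of (x k)
  obtain ⟨N, hN⟩ := Finite.exists_le i
  choose y hy using fun k => PowerSeries.truncQuotient_surjective (R := R) _
    (powQuotMap R _ _ _ (le_of_eq (by rw [mul_right_comm, ← pow_add,
      Nat.add_sub_cancel' (hN k)])) (q k))
  refine ⟨N, y, fun k => ?_⟩
  rw [ofPowerSeries, RingHom.comp_apply, hy, Ring.DirectLimit.of_f (hN k), hq]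

variable {R p} {σ ι : Type*}

theorem eval₂_ofPowerSeries (N : ℕ) (y : σ → PowerSeries R) (F : MvPolynomial σ R) :
    MvPolynomial.eval₂ (toPerfQuot R p) (fun k => ofPowerSeries R p N (y k)) F =
      ofPowerSeries R p N (MvPolynomial.eval₂ PowerSeries.C y F) := by
  rw [MvPolynomial.eval₂_comp_left, ofPowerSeries_comp_C]
  rfl

theorem exists_order_lt_of_exists_solution [Finite σ] (hp : 0 < p) (f g : ι → MvPolynomial σ R)
    (h : ∃ x : σ → PerfQuot R p, ∀ i,
      MvPolynomial.eval₂ (toPerfQuot R p) x (f i) = 0 ∧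
        MvPolynomial.eval₂ (toPerfQuot R p) x (g i) ≠ 0) :
    ∃ y : σ → PowerSeries R, ∀ i j,
      (MvPolynomial.eval₂ PowerSeries.C y (g j)).order <
        (MvPolynomial.eval₂ PowerSeries.C y (f i)).order := by
  obtain ⟨x, hx⟩ := h
  obtain ⟨N, y, hy⟩ := exists_ofPowerSeries_eq R p x
  obtain rfl : (fun k => ofPowerSeries R p N (y k)) = x := funext hy
  refine ⟨y, fun i j => ?_⟩
  have hf := (hx i).1
  have hg := (hx j).2
  rw [eval₂_ofPowerSeries, ofPowerSeries_eq_zero_iff R p hp] at hf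
  rw [eval₂_ofPowerSeries, Ne, ofPowerSeries_eq_zero_iff R p hp, not_le] at hg
  exact hg.trans_le hf

theorem exists_solution_of_exists_order_lt [Finite ι] (hp : 2 ≤ p)
    (f g : ι → MvPolynomial σ R)
    (h : ∃ y : σ → PowerSeries R, ∀ i j,
      (MvPolynomial.eval₂ PowerSeries.C y (g j)).order <
        (MvPolynomial.eval₂ PowerSeries.C y (f i)).order) :
    ∃ x : σ → PerfQuot R p, ∀ i,
      MvPolynomial.eval₂ (toPerfQuot R p) x (f i) = 0 ∧
        MvPolynomial.eval₂ (toPerfQuot R p) x (g i) ≠ 0 := by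
  obtain ⟨y, hy⟩ := h
  obtain ⟨γ, hg, hf⟩ := ENat.exists_nat_between hy
  set L := p ^ (γ * γ) * (p - 1)
  have hL : γ * γ < L :=
    (Nat.lt_pow_self hp).trans_le (Nat.le_mul_of_pos_right _ (by omega))
  obtain ⟨a, ha, hlt, hle⟩ := Nat.exists_mul_lt_le_mul_succ hL
  refine ⟨fun k => ofPowerSeries R p (γ * γ) (PowerSeries.expand a ha.ne' (y k)), fun i => ?_⟩
  simp only [eval₂_ofPowerSeries, PowerSeries.eval₂_expand, ofPowerSeries_eq_zero_iff R p
    (by omega : 0 < p), PowerSeries.order_expand, nsmul_eq_mul, ne_eq, not_le]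
  constructor
  · calc (L : ℕ∞) ≤ (a : ℕ∞) * (γ + 1 : ℕ) := by exact_mod_cast hle
      _ ≤ a * (MvPolynomial.eval₂ PowerSeries.C y (f i)).order := by
        gcongr; exact Order.add_one_le_of_lt (hf i)
  · calc (a : ℕ∞) * (MvPolynomial.eval₂ PowerSeries.C y (g i)).order
        ≤ (a : ℕ∞) * γ := by
          gcongr; exact hg i
      _ < L := by exact_mod_cast hlt

end PerfQuot

theorem stmt8_general (p : ℕ) [hp : Fact p.Prime] (n m : ℕ)
    (f g : Fin n → MvPolynomial (Fin m) (AlgebraicClosure (ZMod p))) :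
    (∃ x : Fin m → PerfQuot (AlgebraicClosure (ZMod p)) p, ∀ i : Fin n,
        MvPolynomial.eval₂ (toPerfQuot (AlgebraicClosure (ZMod p)) p) x (f i) = 0 ∧
        MvPolynomial.eval₂ (toPerfQuot (AlgebraicClosure (ZMod p)) p) x (g i) ≠ 0) ↔
    (∃ x : Fin m → PowerSeries (AlgebraicClosure (ZMod p)), ∀ i j : Fin n,
        PowerSeries.order (MvPolynomial.eval₂ ((PowerSeries.C (R := AlgebraicClosure (ZMod p)))) x (g j)) <
        PowerSeries.order (MvPolynomial.eval₂ ((PowerSeries.C (R := AlgebraicClosure (ZMod p)))) x (f i))) :=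
  ⟨PerfQuot.exists_order_lt_of_exists_solution hp.out.pos f g,
    PerfQuot.exists_solution_of_exists_order_lt hp.out.two_le f g⟩

/-- Fix a prime `p`, `n, m ≥ 1` and polynomials `f i, g i` over `𝔽̄_p`.
Let `A_p = 𝔽̄_p[t^{1/p^∞}]/(t^{p-1})`. The system `f i = 0, g i ≠ 0` has a solution in
`A_p^m` iff there is an `m`-tuple `x` of formal power series over `𝔽̄_p` with
`ord (f i x) > ord (g j x)` for all `i, j` (t-adic order, `ord 0 = ∞`). -/
theorem stmt8 (p : ℕ) [hp : Fact p.Prime] (n m : ℕ) (hn : 1 ≤ n) (hm : 1 ≤ m)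
    (f g : Fin n → MvPolynomial (Fin m) (AlgebraicClosure (ZMod p))) :
    (∃ x : Fin m → PerfQuot (AlgebraicClosure (ZMod p)) p, ∀ i : Fin n,
        MvPolynomial.eval₂ (toPerfQuot (AlgebraicClosure (ZMod p)) p) x (f i) = 0 ∧
        MvPolynomial.eval₂ (toPerfQuot (AlgebraicClosure (ZMod p)) p) x (g i) ≠ 0) ↔
    (∃ x : Fin m → PowerSeries (AlgebraicClosure (ZMod p)), ∀ i j : Fin n,
        PowerSeries.order (MvPolynomial.eval₂ ((PowerSeries.C (R := AlgebraicClosure (ZMod p)))) x (g j)) <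
        PowerSeries.order (MvPolynomial.eval₂ ((PowerSeries.C (R := AlgebraicClosure (ZMod p)))) x (f i))) :=
  stmt8_general p (hp := hp) n m f g
end
end

section
/- Fix a prime p. The rings (𝔽̄_p^ℕ)[t^{1/p^∞}]/(t^{p−1}) and ((𝔽̄_p[t^{1/p^∞}]/(t^{p−1}))^ℕ are existentially equivalent in the language of rings: for all m, n ∈ ℕ and all polynomials f_1,…,f_n, g_1,…,g_n ∈ ℤ[x_1,…,x_m], the system f_1(x) = … = f_n(x) = 0, g_1(x) ≠ 0, …, g_n(x) ≠ 0 has a solution in the first ring if and only if it has a solution in the second. Here 𝔽̄_p^ℕ is the product of countably many copies of 𝔽̄_p. -/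
/-!
The ring map `PerfQuot (ℕ → K) p → (ℕ → PerfQuot K p)` induced by the coordinate projections
is injective (the transition maps `X ↦ X^p` of the direct system are injective), so solutions
move from left to right. Conversely, a solution in the product only needs one coordinate per
inequation, so it may be replaced by one whose entries are functions with finite range. Such a
function is a finite sum of idempotents times diagonal elements, hence lies in the image of the
map, and injectivity pulls the solution back.
-/

noncomputable section

open Polynomial

section Systems

variable {σ ι κ A B : Type*} [CommRing A] [Algebra ℤ A] [CommRing B] [Algebra ℤ B]

def SolvesSystem (f g : ι → MvPolynomial σ ℤ) (x : σ → A) : Prop :=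
  ∀ i, MvPolynomial.aeval x (f i) = 0 ∧ MvPolynomial.aeval x (g i) ≠ 0

theorem MvPolynomial.ringHom_aeval_int (φ : A →+* B) (x : σ → A) (h : MvPolynomial σ ℤ) :
    φ (MvPolynomial.aeval x h) = MvPolynomial.aeval (φ ∘ x) h := by
  rw [MvPolynomial.map_aeval, MvPolynomial.aeval_eq_eval₂Hom, RingHom.ext_int (φ.comp _) _]
  rfl

theorem solvesSystem_comp_iff {f g : ι → MvPolynomial σ ℤ} {x : σ → A} {φ : A →+* B}
    (hφ : Function.Injective φ) : SolvesSystem f g (φ ∘ x) ↔ SolvesSystem f g x := by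
  simp only [SolvesSystem, ← MvPolynomial.ringHom_aeval_int, map_eq_zero_iff φ hφ, ne_eq]

theorem MvPolynomial.aeval_int_comp_right (x : σ → κ → B) (c : κ → κ) (h : MvPolynomial σ ℤ) :
    MvPolynomial.aeval (fun j => x j ∘ c) h = MvPolynomial.aeval x h ∘ c := by
  have := MvPolynomial.ringHom_aeval_int (RingHom.pi fun k => Pi.evalRingHom _ (c k)) x h
  exact this.symm

theorem SolvesSystem.exists_finite_range [Finite ι] {f g : ι → MvPolynomial σ ℤ}
    {x : σ → κ → B} (hx : SolvesSystem f g x) :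
    ∃ y : σ → κ → B, SolvesSystem f g y ∧ ∀ j, (Set.range (y j)).Finite := by
  rcases isEmpty_or_nonempty ι with hι | ⟨⟨i₀⟩⟩
  · exact ⟨fun _ _ => 0, isEmptyElim, fun _ => Set.finite_range_const⟩
  choose w hw using fun i => Function.ne_iff.1 (hx i).2
  classical
  let c : κ → κ := fun k => if k ∈ Set.range w then k else w i₀
  have hc_range : Set.range c ⊆ Set.range w := by
    rintro _ ⟨k, rfl⟩
    by_cases hk : k ∈ Set.range w
    · simpa only [c, if_pos hk]
    · simp only [c, if_neg hk, Set.mem_range_self]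
  refine ⟨fun j => x j ∘ c, fun i => ⟨?_, ?_⟩, fun j => ?_⟩
  · rw [MvPolynomial.aeval_int_comp_right, (hx i).1]
    rfl
  · rw [MvPolynomial.aeval_int_comp_right, Function.ne_iff]
    exact ⟨w i, by simpa [c] using hw i⟩
  · rw [Set.range_comp]
    exact ((Set.finite_range w).subset hc_range).image _

end Systems

namespace PerfQuot

variable {κ R S T : Type*} [CommRing R] [CommRing S] [CommRing T] {p : ℕ}

theorem mk_X_pow_eq_zero_iff {a : ℕ} {F : R[X]} :
    Ideal.Quotient.mk (Ideal.span {(X : R[X]) ^ a}) F = 0 ↔ ∀ i < a, F.coeff i = 0 := by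
  rw [Ideal.Quotient.eq_zero_iff_mem, Ideal.mem_span_singleton, ← X_pow_dvd_iff]

theorem powQuotMap_mk {a b k : ℕ} (h : b ≤ a * k) (F : R[X]) :
    powQuotMap R a b k h (Ideal.Quotient.mk _ F) = Ideal.Quotient.mk _ (expand R k F) := by
  simp [powQuotMap, coe_expand]

theorem powQuotMap_injective {a b k : ℕ} (hk : 0 < k) (h : b ≤ a * k) (h' : a * k ≤ b) :
    Function.Injective (powQuotMap R a b k h) := by
  rw [injective_iff_map_eq_zero]
  intro x hx
  obtain ⟨F, rfl⟩ := Ideal.Quotient.mk_surjective x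
  rw [powQuotMap_mk, mk_X_pow_eq_zero_iff] at hx
  refine mk_X_pow_eq_zero_iff.2 fun i hi => ?_
  rw [← coeff_expand_mul hk]
  exact hx (i * k) (((Nat.mul_lt_mul_right hk).2 hi).trans_le h')

variable (R p) in
abbrev Stage (n : ℕ) : Type _ := R[X] ⧸ Ideal.span {(X : R[X]) ^ (p ^ n * (p - 1))}

theorem pow_mul_pred_mul_pow_sub {n m : ℕ} (h : n ≤ m) :
    p ^ n * (p - 1) * p ^ (m - n) = p ^ m * (p - 1) := by
  rw [mul_right_comm, ← pow_add, Nat.add_sub_cancel' h]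

variable (R p) in
abbrev transition {n m : ℕ} (h : n ≤ m) : Stage R p n →+* Stage R p m :=
  powQuotMap R _ _ (p ^ (m - n)) (pow_mul_pred_mul_pow_sub h).ge

instance : DirectedSystem (Stage R p) fun _ _ h => transition R p h where
  map_self n x := by
    obtain ⟨F, rfl⟩ := Ideal.Quotient.mk_surjective x
    simp [powQuotMap_mk]
  map_map {l j i} hij hjl x := by
    obtain ⟨F, rfl⟩ := Ideal.Quotient.mk_surjective x
    rw [powQuotMap_mk, powQuotMap_mk, powQuotMap_mk, expand_expand, ← pow_add,
      Nat.sub_add_sub_cancel hjl hij]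

variable (R p) in
def of (n : ℕ) : Stage R p n →+* PerfQuot R p := Ring.DirectLimit.of _ _ n

theorem of_injective (hp : 0 < p) (n : ℕ) : Function.Injective (of R p n) :=
  Ring.DirectLimit.of_injective (f' := fun _ _ h => transition R p h)
    (fun _ _ h => powQuotMap_injective (pow_pos hp _) _ (pow_mul_pred_mul_pow_sub h).le) n

theorem exists_of (z : PerfQuot R p) : ∃ n x, of R p n x = z :=
  Ring.DirectLimit.exists_of z

theorem exists_of_mk (z : PerfQuot R p) : ∃ n F, of R p n (Ideal.Quotient.mk _ F) = z := by
  obtain ⟨n, x, rfl⟩ := exists_of z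
  obtain ⟨F, rfl⟩ := Ideal.Quotient.mk_surjective x
  exact ⟨n, F, rfl⟩

variable (p) in
def Stage.map (φ : R →+* S) (n : ℕ) : Stage R p n →+* Stage S p n :=
  Ideal.quotientMap _ (mapRingHom φ) <| Ideal.span_le.2 <| by simp

theorem Stage.map_mk (φ : R →+* S) {n : ℕ} (F : R[X]) :
    Stage.map p φ n (Ideal.Quotient.mk _ F) = Ideal.Quotient.mk _ (F.map φ) :=
  Ideal.quotientMap_mk

theorem Stage.map_comp_transition (φ : R →+* S) {n m : ℕ} (h : n ≤ m) :
    (Stage.map p φ m).comp (transition R p h) = (transition S p h).comp (Stage.map p φ n) :=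
  Ideal.Quotient.ringHom_ext <| RingHom.ext fun F => by
    simp only [RingHom.comp_apply, Stage.map_mk, powQuotMap_mk, map_expand]

variable (p) in
def map (φ : R →+* S) : PerfQuot R p →+* PerfQuot S p :=
  Ring.DirectLimit.map (fun n => Stage.map p φ n) fun _ _ h => Stage.map_comp_transition φ h

theorem map_of (φ : R →+* S) {n : ℕ} (x : Stage R p n) :
    map p φ (of R p n x) = of S p n (Stage.map p φ n x) :=
  Ring.DirectLimit.map_apply_of _ _ x

theorem map_of_mk (φ : R →+* S) {n : ℕ} (F : R[X]) :
    map p φ (of R p n (Ideal.Quotient.mk _ F)) = of S p n (Ideal.Quotient.mk _ (F.map φ)) := by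
  rw [map_of, Stage.map_mk]

theorem map_map (φ : R →+* S) (ψ : S →+* T) (z : PerfQuot R p) :
    map p ψ (map p φ z) = map p (ψ.comp φ) z := by
  obtain ⟨n, F, rfl⟩ := exists_of_mk z
  simp only [map_of_mk, Polynomial.map_map]

theorem map_id (z : PerfQuot R p) : map p (RingHom.id R) z = z := by
  obtain ⟨n, F, rfl⟩ := exists_of_mk z
  rw [map_of_mk, Polynomial.map_id]

variable (R p) in
def C : R →+* PerfQuot R p := (of R p 0).comp ((Ideal.Quotient.mk _).comp Polynomial.C)

theorem map_C (φ : R →+* S) (r : R) : map p φ (C R p r) = C S p (φ r) := by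
  simp only [C, RingHom.comp_apply, map_of_mk, Polynomial.map_C]

variable (κ R p) in
def toPi : PerfQuot (κ → R) p →+* (κ → PerfQuot R p) :=
  RingHom.pi fun k => map p (Pi.evalRingHom _ k)

theorem Stage.eq_zero_of_forall_map_eval {n : ℕ} {x : Stage (κ → R) p n}
    (hx : ∀ k, Stage.map p (Pi.evalRingHom _ k) n x = 0) : x = 0 := by
  obtain ⟨F, rfl⟩ := Ideal.Quotient.mk_surjective x
  refine mk_X_pow_eq_zero_iff.2 fun i hi => funext fun k => ?_
  have hk := hx k
  rw [Stage.map_mk, mk_X_pow_eq_zero_iff] at hk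
  simpa using hk i hi

variable (κ) in
theorem toPi_injective (hp : 0 < p) : Function.Injective (toPi κ R p) := by
  rw [injective_iff_map_eq_zero]
  intro z hz
  obtain ⟨n, x, rfl⟩ := exists_of z
  have hx : ∀ k, Stage.map p (Pi.evalRingHom _ k) n x = 0 := fun k =>
    of_injective hp n <| by rw [map_zero, ← map_of]; exact congrFun hz k
  rw [Stage.eq_zero_of_forall_map_eval hx, map_zero]

variable (κ) in
theorem toPi_map_const (a : PerfQuot R p) :
    toPi κ R p (map p (Pi.constRingHom κ R) a) = fun _ => a := by
  funext _
  exact (map_map _ _ a).trans (map_id a)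

theorem toPi_C (s : κ → R) : toPi κ R p (C _ p s) = fun k => C R p (s k) :=
  funext fun _ => map_C _ s

theorem mem_range_toPi_of_finite_range {y : κ → PerfQuot R p}
    (hy : (Set.range y).Finite) : y ∈ (toPi κ R p).range := by
  classical
  have hsum : y = ∑ v ∈ hy.toFinset,
      toPi κ R p (C _ p fun k => if y k = v then 1 else 0) *
        toPi κ R p (map p (Pi.constRingHom κ R) v) := by
    funext k
    simp only [Finset.sum_apply, Pi.mul_apply, toPi_C, toPi_map_const, apply_ite (C R p), map_one,
      map_zero, ite_mul, one_mul, zero_mul, Finset.sum_ite_eq, Set.Finite.mem_toFinset,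
      Set.mem_range_self, if_true]
  rw [hsum]
  exact Subring.sum_mem _ fun v _ => Subring.mul_mem _ ⟨_, rfl⟩ ⟨_, rfl⟩

end PerfQuot

/-- Fix a prime `p`. The rings `(𝔽̄_p^ℕ)[t^{1/p^∞}]/(t^{p-1})` and
`(𝔽̄_p[t^{1/p^∞}]/(t^{p-1}))^ℕ` are existentially equivalent in the language of rings:
every finite system of integer polynomial equations and inequations is solvable in one
iff it is solvable in the other. -/
theorem stmt10 (p : ℕ) [hp : Fact p.Prime] (m n : ℕ)
    (f g : Fin n → MvPolynomial (Fin m) ℤ) :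
    (∃ x : Fin m → PerfQuot (ℕ → AlgebraicClosure (ZMod p)) p, ∀ i : Fin n,
        MvPolynomial.aeval x (f i) = 0 ∧ MvPolynomial.aeval x (g i) ≠ 0) ↔
    (∃ x : Fin m → (ℕ → PerfQuot (AlgebraicClosure (ZMod p)) p), ∀ i : Fin n,
        MvPolynomial.aeval x (f i) = 0 ∧ MvPolynomial.aeval x (g i) ≠ 0) := by
  show (∃ x, SolvesSystem f g x) ↔ ∃ x, SolvesSystem f g x
  have hinj := PerfQuot.toPi_injective ℕ (R := AlgebraicClosure (ZMod p)) hp.out.pos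
  constructor
  · rintro ⟨x, hx⟩
    exact ⟨_ ∘ x, (solvesSystem_comp_iff hinj).2 hx⟩
  · rintro ⟨x, hx⟩
    obtain ⟨y, hy, hy_fin⟩ := hx.exists_finite_range
    choose z hz using fun j => PerfQuot.mem_range_toPi_of_finite_range (hy_fin j)
    refine ⟨z, (solvesSystem_comp_iff hinj).1 ?_⟩
    rwa [show _ ∘ z = y from funext hz]

end
end

section
/- Let I be a nonempty directed partially ordered set and ⟨R_i, φ_{ij}⟩ a directed system of commutative rings indexed by I in which every transition map φ_{ij} : R_i → R_j (i ≤ j) is injective, and let R = colim_i R_i be its direct limit. Let ι be an infinite index type, and form the directed system ⟨R_i^ι⟩ of product rings with componentwise transition maps. Then the product ring R^ι and the direct limit colim_i (R_i^ι) are existentially equivalent in the language of rings: for all m, n ∈ ℕ and all polynomials f_1,…,f_n, g_1,…,g_n ∈ ℤ[x_1,…,x_m], the system f_1(x) = … = f_n(x) = 0, g_1(x) ≠ 0, …, g_n(x) ≠ 0 has a solution in R^ι if and only if it has a solution in colim_i (R_i^ι). -/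
/-!
A solution `x` of the system in `R^ι` has, for each inequation `G k ≠ 0`, a coordinate `l k`
witnessing it. Copying these finitely many columns over all of `ι` gives another solution whose
entries form a finite subset of `R`; that subset lifts to a single `R i`, so the new solution
comes from `colim (R i)^ι`. Conversely, for injective transition maps the canonical map
`colim (R i)^ι → R^ι` is injective, and injective ring maps preserve and reflect solutions.
-/

open MvPolynomial Function

section Solutions

variable {σ τ R A B : Type*} [CommSemiring R] [CommSemiring A] [Algebra R A]
  [CommSemiring B] [Algebra R B]

def IsSolution (F G : τ → MvPolynomial σ R) (x : σ → A) : Prop :=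
  ∀ k, aeval x (F k) = 0 ∧ aeval x (G k) ≠ 0

variable {F G : τ → MvPolynomial σ R}

theorem isSolution_comp_iff {φ : A →ₐ[R] B} (hφ : Injective φ) {x : σ → A} :
    IsSolution F G (φ ∘ x) ↔ IsSolution F G x := by
  have hφx (p : MvPolynomial σ R) : aeval (φ ∘ x) p = φ (aeval x p) :=
    (comp_aeval_apply x φ p).symm
  simp only [IsSolution, hφx, ne_eq, map_eq_zero_iff φ hφ]

theorem aeval_pi_apply {ι : Type*} (x : σ → ι → A) (p : MvPolynomial σ R) (l : ι) :
    aeval x p l = aeval (fun j => x j l) p :=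
  comp_aeval_apply x (Pi.evalAlgHom R _ l) p

theorem aeval_comp_pi {ι ι' : Type*} (x : σ → ι → A) (c : ι' → ι) (p : MvPolynomial σ R) :
    aeval (fun j => x j ∘ c) p = aeval x p ∘ c :=
  funext fun l => by simp only [aeval_pi_apply, comp_apply]

theorem IsSolution.exists_comp_pi {ι : Type*} [Nonempty τ] {x : σ → ι → A}
    (hx : IsSolution F G x) : ∃ (l : τ → ι) (c : ι → τ), IsSolution F G (fun j => x j ∘ l ∘ c) := by
  choose l hl using fun k => ne_iff.1 (hx k).2
  -- `l ∘ invFun l` fixes every witness coordinate `l k`.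
  refine ⟨l, invFun l, fun k => ⟨?_, ?_⟩⟩ <;> rw [aeval_comp_pi x (l ∘ invFun l)]
  · rw [(hx k).1]
    rfl
  · exact ne_iff.2 ⟨l k, by simpa [invFun_eq ⟨k, rfl⟩] using hl k⟩

end Solutions

namespace Ring.DirectLimit

variable {I : Type*} [Preorder I]

theorem exists_of_finite [Nonempty I] [IsDirectedOrder I] {R : I → Type*} [∀ i, CommRing (R i)]
    {f : ∀ i j, i ≤ j → R i → R j} {σ : Type*} [Finite σ] (c : σ → DirectLimit R f) :
    ∃ i, ∃ y : σ → R i, ∀ s, of R f i (y s) = c s := by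
  choose i y hy using fun s => exists_of (c s)
  obtain ⟨i₀, hi₀⟩ := Finite.exists_le i
  exact ⟨i₀, fun s => f (i s) i₀ (hi₀ s) (y s), fun s => by rw [of_f, hy]⟩

variable {R : I → Type*} [∀ i, CommRing (R i)] (f : ∀ i j, i ≤ j → R i →+* R j) (ι : Type*)

noncomputable def toPi : DirectLimit (fun i => ι → R i) (fun i j h y l => f i j h (y l)) →+*
    (ι → DirectLimit R fun i j h => f i j h) :=
  lift _ _ _ (fun i => (of R _ i).compLeft ι) fun _ _ h y => funext fun l => of_f h (y l)

variable {f ι}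

theorem toPi_of {i : I} (y : ι → R i) : toPi f ι (of _ _ i y) = of R _ i ∘ y :=
  lift_of ..

theorem toPi_injective [Nonempty I] [IsDirectedOrder I] [DirectedSystem R fun i j h => f i j h]
    (hf : ∀ i j h, Injective (f i j h)) : Injective (toPi f ι) :=
  lift_injective _ _ _ fun i => (of_injective f hf i).comp_left

theorem exists_toPi_eq_comp [Nonempty I] [IsDirectedOrder I] {σ : Type*} [Finite σ]
    (c : σ → DirectLimit R fun i j h => f i j h) (κ : ι → σ) : ∃ z, toPi f ι z = c ∘ κ := by
  obtain ⟨i, y, hy⟩ := exists_of_finite c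
  exact ⟨of _ _ i (y ∘ κ), by rw [toPi_of]; funext l; exact hy (κ l)⟩

end Ring.DirectLimit

open Ring.DirectLimit in
theorem stmt11_general {I : Type*} [Preorder I] [IsDirected I (· ≤ ·)] [Nonempty I]
    (R : I → Type*) [∀ i, CommRing (R i)]
    (f : ∀ i j : I, i ≤ j → R i →+* R j)
    [DirectedSystem R (fun i j h => f i j h)]
    (hinj : ∀ (i j : I) (h : i ≤ j), Function.Injective (f i j h))
    (ι : Type*)
    (m n : ℕ) (F G : Fin n → MvPolynomial (Fin m) ℤ) :
    (∃ x : Fin m → (ι → Ring.DirectLimit R (fun i j h => f i j h)), ∀ k : Fin n,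
        MvPolynomial.aeval x (F k) = 0 ∧ MvPolynomial.aeval x (G k) ≠ 0) ↔
    (∃ x : Fin m → Ring.DirectLimit (fun i => ι → R i)
          (fun i j h y l => f i j h (y l)), ∀ k : Fin n,
        MvPolynomial.aeval x (F k) = 0 ∧ MvPolynomial.aeval x (G k) ≠ 0) := by
  have hψ : Injective (toPi f ι).toIntAlgHom := toPi_injective hinj
  constructor
  · rintro ⟨x, hx⟩
    cases isEmpty_or_nonempty (Fin n)
    · exact ⟨0, isEmptyElim⟩
    obtain ⟨l, c, hsol⟩ := IsSolution.exists_comp_pi hx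
    choose z hz using fun j => exists_toPi_eq_comp (x j ∘ l) c
    have hψz : (toPi f ι).toIntAlgHom ∘ z = fun j => x j ∘ l ∘ c := funext hz
    refine ⟨z, (isSolution_comp_iff hψ).1 ?_⟩
    rw [hψz]
    exact hsol
  · rintro ⟨y, hy⟩
    exact ⟨_, (isSolution_comp_iff hψ).2 hy⟩

/-- Let `I` be a nonempty directed poset, `⟨R i, f i j⟩` a directed
system of commutative rings with injective transition maps, and `R = colim R i`. For any
infinite index type `ι`, the product ring `R^ι` and the direct limit `colim (R i)^ι` of
the componentwise product system are existentially equivalent in the language of rings: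
every finite system of integer polynomial equations and inequations is solvable in one
iff it is solvable in the other. -/
theorem stmt11 {I : Type*} [Preorder I] [IsDirected I (· ≤ ·)] [Nonempty I]
    (R : I → Type*) [∀ i, CommRing (R i)]
    (f : ∀ i j : I, i ≤ j → R i →+* R j)
    [DirectedSystem R (fun i j h => f i j h)]
    (hinj : ∀ (i j : I) (h : i ≤ j), Function.Injective (f i j h))
    (ι : Type*) [Infinite ι]
    (m n : ℕ) (F G : Fin n → MvPolynomial (Fin m) ℤ) :
    (∃ x : Fin m → (ι → Ring.DirectLimit R (fun i j h => f i j h)), ∀ k : Fin n,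
        MvPolynomial.aeval x (F k) = 0 ∧ MvPolynomial.aeval x (G k) ≠ 0) ↔
    (∃ x : Fin m → Ring.DirectLimit (fun i => ι → R i)
          (fun i j h y l => f i j h (y l)), ∀ k : Fin n,
        MvPolynomial.aeval x (F k) = 0 ∧ MvPolynomial.aeval x (G k) ≠ 0) :=
  stmt11_general R f hinj ι m n F G
end

section
/- Let p be a prime and n, m positive natural numbers with n dividing m. Fix an algebraic closure ℚ̄ of ℚ and let ℤ[ζ_{p^n−1}] and ℤ[ζ_{p^m−1}] be the subrings of ℚ̄ generated by a primitive (p^n−1)-st, respectively (p^m−1)-st, root of unity, so that ℤ[ζ_{p^n−1}] ⊆ ℤ[ζ_{p^m−1}] (since p^n−1 divides p^m−1). Then p·ℤ[ζ_{p^n−1}] = ℤ[ζ_{p^n−1}] ∩ p·ℤ[ζ_{p^m−1}], i.e. the ideal of ℤ[ζ_{p^m−1}] generated by p contracts to the ideal of ℤ[ζ_{p^n−1}] generated by p. -/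
/-!
`ℤ[ζ_N]` is the full ring of integers of `ℚ(ζ_N)`, hence integrally closed. If `x = p y` with
`x ∈ ℤ[ζ_{p^n-1}]` and `y ∈ ℤ[ζ_{p^m-1}]`, then `y = x / p` lies in `ℚ(ζ_{p^n-1})` and is
integral over `ℤ`, so `y ∈ ℤ[ζ_{p^n-1}]`.
-/

open IntermediateField

theorem IsPrimitiveRoot.closure_le_closure_of_pow_eq_one {R : Type*} [CommRing R] [IsDomain R]
    {ζ ξ : R} {M : ℕ} [NeZero M] (hξ : IsPrimitiveRoot ξ M) (hζ : ζ ^ M = 1) :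
    Subring.closure {ζ} ≤ Subring.closure {ξ} := by
  obtain ⟨i, -, rfl⟩ := hξ.eq_pow_of_pow_eq_one hζ
  refine Subring.closure_le.2 (Set.singleton_subset_iff.2 ?_)
  exact pow_mem (Subring.mem_closure_of_mem (Set.mem_singleton ξ)) i

theorem IsPrimitiveRoot.isIntegral_of_mem_closure {R : Type*} [CommRing R] {ζ y : R} {N : ℕ}
    [NeZero N] (hζ : IsPrimitiveRoot ζ N) (hy : y ∈ Subring.closure {ζ}) : IsIntegral ℤ y :=
  IsIntegral.of_mem_closure' {ζ} (by simpa using hζ.isIntegral (NeZero.pos N)) y hy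

theorem IsPrimitiveRoot.intermediateField_adjoin_isCyclotomicExtension_rat {L : Type*} [Field L]
    [CharZero L] {ζ : L} {N : ℕ} [NeZero N] (hζ : IsPrimitiveRoot ζ N) :
    IsCyclotomicExtension {N} ℚ ℚ⟮ζ⟯ := by
  change IsCyclotomicExtension {N} ℚ ℚ⟮ζ⟯.toSubalgebra
  rw [adjoin_simple_toSubalgebra_of_isAlgebraic
    ((hζ.isIntegral (NeZero.pos N)).tower_top (A := ℚ)).isAlgebraic]
  exact hζ.adjoin_isCyclotomicExtension ℚ

theorem IsPrimitiveRoot.mem_adjoin_int_of_isIntegral {L : Type*} [Field L] [CharZero L]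
    {ζ : L} {N : ℕ} [NeZero N] (hζ : IsPrimitiveRoot ζ N) {y : L} (hyK : y ∈ ℚ⟮ζ⟯)
    (hy : IsIntegral ℤ y) : y ∈ Algebra.adjoin ℤ {ζ} := by
  have := hζ.intermediateField_adjoin_isCyclotomicExtension_rat
  let ι : ℚ⟮ζ⟯ →ₐ[ℤ] L := IsScalarTower.toAlgHom ℤ ℚ⟮ζ⟯ L
  have hint := IsCyclotomicExtension.Rat.isIntegralClosure_adjoin_singleton
    (IsPrimitiveRoot.coe_submonoidClass_iff.mp hζ : IsPrimitiveRoot (AdjoinSimple.gen ℚ ζ) N)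
  have hy' : IsIntegral ℤ (⟨y, hyK⟩ : ℚ⟮ζ⟯) := (isIntegral_algHom_iff ι Subtype.val_injective).1 hy
  obtain ⟨z, hz⟩ := hint.isIntegral_iff.1 hy'
  have hmap : ι z ∈ (Algebra.adjoin ℤ {AdjoinSimple.gen ℚ ζ}).map ι :=
    Subalgebra.mem_map.2 ⟨z, z.2, rfl⟩
  rw [AlgHom.map_adjoin_singleton] at hmap
  have hzy : ((z : ℚ⟮ζ⟯) : L) = y := congrArg Subtype.val hz
  simpa [ι, hzy] using hmap

theorem IsPrimitiveRoot.mem_closure_of_intCast_mul_mem_closure {L : Type*} [Field L] [CharZero L]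
    {ζ : L} {N : ℕ} [NeZero N] (hζ : IsPrimitiveRoot ζ N) {a : ℤ} (ha : a ≠ 0) {y : L}
    (hy : IsIntegral ℤ y) (hay : (a : L) * y ∈ Subring.closure {ζ}) :
    y ∈ Subring.closure {ζ} := by
  have hclosure_le : Subring.closure {ζ} ≤ ℚ⟮ζ⟯.toSubring :=
    Subring.closure_le.2 (by simp)
  have hyK : y ∈ ℚ⟮ζ⟯ := by
    have h := ℚ⟮ζ⟯.mul_mem (ℚ⟮ζ⟯.inv_mem (intCast_mem _ a)) (hclosure_le hay)
    rwa [inv_mul_cancel_left₀ (Int.cast_ne_zero.2 ha)] at h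
  have h := hζ.mem_adjoin_int_of_isIntegral hyK hy
  rwa [Algebra.adjoin_int] at h

/-- Let `p` be a prime and `n ∣ m` positive naturals. Let `ℤ[ζ_{p^n-1}]`
and `ℤ[ζ_{p^m-1}]` be the subrings of a fixed algebraic closure of `ℚ` generated by a
primitive `(p^n-1)`-st, resp. `(p^m-1)`-st, root of unity. Then
`p·ℤ[ζ_{p^n-1}] = ℤ[ζ_{p^n-1}] ∩ p·ℤ[ζ_{p^m-1}]` (as subsets of the algebraic closure). -/
theorem stmt13 (p n m : ℕ) (hp : p.Prime) (hn : 0 < n) (hm : 0 < m) (hnm : n ∣ m)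
    (ζn ζm : AlgebraicClosure ℚ)
    (hζn : IsPrimitiveRoot ζn (p ^ n - 1)) (hζm : IsPrimitiveRoot ζm (p ^ m - 1)) :
    {x : AlgebraicClosure ℚ |
        ∃ z ∈ Subring.closure {ζn}, x = (p : AlgebraicClosure ℚ) * z} =
    {x : AlgebraicClosure ℚ | x ∈ Subring.closure {ζn} ∧
        ∃ y ∈ Subring.closure {ζm}, x = (p : AlgebraicClosure ℚ) * y} := by
  have : NeZero (p ^ n - 1) := ⟨by have := Nat.one_lt_pow hn.ne' hp.one_lt; omega⟩
  have : NeZero (p ^ m - 1) := ⟨by have := Nat.one_lt_pow hm.ne' hp.one_lt; omega⟩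
  have hsub : Subring.closure {ζn} ≤ Subring.closure {ζm} :=
    hζm.closure_le_closure_of_pow_eq_one
      ((hζn.pow_eq_one_iff_dvd _).2 (Nat.pow_sub_one_dvd_pow_sub_one p hnm))
  ext x
  constructor
  · rintro ⟨z, hz, rfl⟩
    exact ⟨mul_mem (natCast_mem _ p) hz, z, hsub hz, rfl⟩
  · rintro ⟨hx, y, hy, rfl⟩
    exact ⟨y, hζn.mem_closure_of_intCast_mul_mem_closure (a := p) (by exact_mod_cast hp.ne_zero)
      (hζm.isIntegral_of_mem_closure hy) (by simp [hx]), rfl⟩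
end

section
/- Fix a prime p and natural numbers n, m ≥ 1, and let f_1,…,f_n ∈ ℤ[x_1,…,x_m]. Then there exists x ∈ (ℤ^ab/pℤ^ab)^m with f_i(x) = 0 for all 1 ≤ i ≤ n if and only if there exists x ∈ 𝔽̄_p^m with f_i(x) = 0 for all 1 ≤ i ≤ n. -/
noncomputable section

/-- The ring of abelian algebraic integers `ℤ^ab`: the subring of a fixed algebraic
closure of `ℚ` generated by all roots of unity. -/
noncomputable def Zab : Subring (AlgebraicClosure ℚ) :=
  Subring.closure {x : AlgebraicClosure ℚ | ∃ n : ℕ, 0 < n ∧ x ^ n = 1}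

/-- The quotient `ℤ^ab / p ℤ^ab`. -/
noncomputable abbrev ZabMod (p : ℕ) : Type :=
  Zab ⧸ Ideal.span {(p : Zab)}

/-!
Since `ℤ^ab` is integral over `ℤ`, `p` is not a unit in it, and the residue fields of `ℤ^ab/p`
are algebraic over `𝔽_p`, so they embed into `𝔽̄_p`; this moves solutions from `ℤ^ab/p` to `𝔽̄_p`.

Conversely, a solution in `𝔽̄_p` lives in a finite field `K` with `q` elements. As `p ∤ q - 1`,
the cyclotomic polynomial `Φ_{q-1}` is separable over `𝔽_p`, so `𝔽_p[X]/Φ_{q-1}` is a finite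
product of fields. Each factor contains a primitive `(q-1)`-th root of unity, hence all roots of
`X^q - X`, hence a copy of `K`; so `K` embeds diagonally into `𝔽_p[X]/Φ_{q-1}`, which maps to
`ℤ^ab/p` by sending `X` to a root of unity of order `q - 1`.
-/

section

open Polynomial

theorem IsPrimitiveRoot.of_aeval_cyclotomic_eq_zero {R L : Type*} [CommRing R] [CommRing L]
    [IsDomain L] [Algebra R L] {n : ℕ} [NeZero (n : L)] {μ : L}
    (h : aeval μ (cyclotomic n R) = 0) : IsPrimitiveRoot μ n := by
  rwa [← isRoot_cyclotomic_iff, ← map_cyclotomic n (algebraMap R L), IsRoot, eval_map,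
    ← aeval_def]

theorem IsArtinianRing.nonempty_ringHom_of_forall_quotient {R A : Type*} [Semiring R]
    [CommRing A] [IsArtinianRing A] [IsReduced A]
    (h : ∀ I : MaximalSpectrum A, Nonempty (R →+* A ⧸ I.asIdeal)) : Nonempty (R →+* A) :=
  ⟨(equivPi A).symm.toRingEquiv.toRingHom.comp (RingHom.pi fun I ↦ (h I).some)⟩

namespace FiniteField

variable {F K : Type*} [Field F] [Field K] [Fintype K] [Algebra F K]

theorem nonempty_algHom_of_isPrimitiveRoot {L : Type*} [Field L] [Algebra F L] {ζ : L}
    (hζ : IsPrimitiveRoot ζ (Fintype.card K - 1)) : Nonempty (K →ₐ[F] L) := by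
  refine ⟨IsSplittingField.lift K (X ^ Fintype.card K - X) ?_⟩
  have hX : (X ^ Fintype.card K - X : L[X]) = X * (X ^ (Fintype.card K - 1) - C 1) := by
    rw [mul_sub, ← pow_succ', Nat.sub_add_cancel Fintype.card_pos, C_1, mul_one]
  rw [Polynomial.map_sub, Polynomial.map_pow, map_X, hX]
  exact Splits.X.mul (X_pow_sub_one_splits hζ)

theorem natCast_card_sub_one_ne_zero : ((Fintype.card K - 1 : ℕ) : F) ≠ 0 := by
  intro h
  have := congrArg (algebraMap F K) h
  rw [map_natCast, map_zero, Nat.cast_sub Fintype.card_pos, cast_card_eq_zero] at this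
  simp at this

theorem nonempty_ringHom_adjoinRoot_cyclotomic :
    Nonempty (K →+* AdjoinRoot (cyclotomic (Fintype.card K - 1) F)) := by
  set N := Fintype.card K - 1
  have hN : NeZero (N : F) := ⟨natCast_card_sub_one_ne_zero (K := K)⟩
  have : Module.Finite F (AdjoinRoot (cyclotomic N F)) :=
    (AdjoinRoot.powerBasis (cyclotomic.monic N F).ne_zero).finite
  have : IsArtinianRing (AdjoinRoot (cyclotomic N F)) := .of_finite F _
  have : IsReduced (AdjoinRoot (cyclotomic N F)) := (Ideal.isRadical_iff_quotient_reduced _).mp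
    (isRadical_iff_span_singleton.mp (separable_cyclotomic N F).squarefree.isRadical)
  refine IsArtinianRing.nonempty_ringHom_of_forall_quotient fun I ↦ ?_
  have := I.isMaximal
  let := Ideal.Quotient.field I.asIdeal
  have : NeZero (N : AdjoinRoot (cyclotomic N F) ⧸ I.asIdeal) :=
    ⟨by simpa using (_root_.map_ne_zero (algebraMap F _)).mpr hN.out⟩
  have hroot : aeval (Ideal.Quotient.mkₐ F I.asIdeal (AdjoinRoot.root _)) (cyclotomic N F) = 0 := by
    rw [aeval_algHom_apply, AdjoinRoot.aeval_eq, AdjoinRoot.mk_self, map_zero]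
  exact ⟨(nonempty_algHom_of_isPrimitiveRoot (F := F)
    (.of_aeval_cyclotomic_eq_zero hroot)).some.toRingHom⟩

theorem nonempty_ringHom_of_aeval_cyclotomic_eq_zero {R : Type*} [CommRing R] (ι : F →+* R)
    {ζ : R} (hζ : aeval ζ (cyclotomic (Fintype.card K - 1) ℤ) = 0) : Nonempty (K →+* R) := by
  have hι : eval₂ ι ζ (cyclotomic (Fintype.card K - 1) F) = 0 := by
    rwa [← map_cyclotomic_int, eval₂_map, RingHom.ext_int (ι.comp _) (algebraMap ℤ R),
      ← aeval_def]
  exact ⟨(AdjoinRoot.lift ι ζ hι).comp nonempty_ringHom_adjoinRoot_cyclotomic.some⟩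

end FiniteField

theorem Ideal.Quotient.nonempty_ringHom_algebraicClosure_zmod (p : ℕ) [Fact p.Prime] {S : Type*}
    [CommRing S] [Algebra.IsIntegral ℤ S] (I : Ideal S) (hI : I ≠ ⊤) (hp : (p : S) ∈ I) :
    Nonempty (S ⧸ I →+* AlgebraicClosure (ZMod p)) := by
  obtain ⟨M, hM, hIM⟩ := I.exists_le_maximal hI
  let := Ideal.Quotient.field M
  have : CharP (S ⧸ M) p := (CharP.charP_iff_prime_eq_zero Fact.out).mpr
    (by rw [← map_natCast (Ideal.Quotient.mk M), Ideal.Quotient.eq_zero_iff_mem]; exact hIM hp)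
  let := ZMod.algebra (S ⧸ M) p
  have : Algebra.IsIntegral (ZMod p) (S ⧸ M) := Algebra.IsIntegral.tower_top ℤ
  exact ⟨(IsAlgClosed.lift : S ⧸ M →ₐ[ZMod p] _).toRingHom.comp (Ideal.Quotient.factor hIM)⟩

theorem MvPolynomial.exists_common_zero_of_ringHom {R S σ ι : Type*} [CommRing R] [CommRing S]
    (φ : R →+* S) (f : ι → MvPolynomial σ ℤ) (h : ∃ x : σ → R, ∀ i, aeval x (f i) = 0) :
    ∃ x : σ → S, ∀ i, aeval x (f i) = 0 := by
  obtain ⟨x, hx⟩ := h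
  exact ⟨fun j ↦ φ.toIntAlgHom (x j), fun i ↦ by rw [← comp_aeval_apply, hx i, map_zero]⟩

theorem IntermediateField.exists_finite_common_zero {F E σ ι : Type*} [Field F] [Finite F]
    [Field E] [Algebra F E] [Algebra.IsAlgebraic F E] [Finite σ] (f : ι → MvPolynomial σ ℤ)
    (x : σ → E) (hx : ∀ i, MvPolynomial.aeval x (f i) = 0) :
    ∃ K : IntermediateField F E, Finite K ∧ ∃ y : σ → K, ∀ i, MvPolynomial.aeval y (f i) = 0 := by
  let K := adjoin F (Set.range x)
  have : FiniteDimensional F K :=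
    finiteDimensional_adjoin fun _ _ ↦ Algebra.IsIntegral.isIntegral _
  let y : σ → K := fun j ↦ ⟨x j, subset_adjoin F _ ⟨j, rfl⟩⟩
  refine ⟨K, Module.finite_of_finite F, y, fun i ↦ Subtype.val_injective ?_⟩
  exact (MvPolynomial.comp_aeval_apply y K.val.toIntAlgHom (f i)).trans (hx i)

theorem Zab_le_integralClosure : Zab ≤ (integralClosure ℤ (AlgebraicClosure ℚ)).toSubring :=
  Subring.closure_le.mpr fun _ ⟨_, hn, hx⟩ ↦ .of_pow hn (hx ▸ isIntegral_one)

instance Zab.isIntegral : Algebra.IsIntegral ℤ Zab :=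
  ⟨fun x ↦ (isIntegral_algHom_iff Zab.subtype.toIntAlgHom Subtype.coe_injective).mp
    (Zab_le_integralClosure x.2)⟩

theorem Zab.exists_aeval_cyclotomic_eq_zero {N : ℕ} (hN : 0 < N) :
    ∃ ζ : Zab, aeval ζ (cyclotomic N ℤ) = 0 := by
  have : NeZero (N : AlgebraicClosure ℚ) := ⟨by exact_mod_cast hN.ne'⟩
  obtain ⟨ζ, hζ⟩ := IsAlgClosed.exists_aeval_eq_zero (AlgebraicClosure ℚ) (cyclotomic N ℤ)
    (degree_cyclotomic_pos N _ hN).ne'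
  have hmem : ζ ∈ Zab :=
    Subring.subset_closure ⟨N, hN, (IsPrimitiveRoot.of_aeval_cyclotomic_eq_zero hζ).pow_eq_one⟩
  have := aeval_algHom_apply Zab.subtype.toIntAlgHom ⟨ζ, hmem⟩ (cyclotomic N ℤ)
  exact ⟨⟨ζ, hmem⟩, Subtype.coe_injective (this.symm.trans hζ)⟩

theorem ZabMod.natCast_self (p : ℕ) : (p : ZabMod p) = 0 :=
  Ideal.Quotient.eq_zero_iff_mem.mpr (Ideal.mem_span_singleton_self _)

theorem Zab.span_natCast_ne_top (p : ℕ) [Fact p.Prime] : Ideal.span {(p : Zab)} ≠ ⊤ := by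
  have hker : RingHom.ker (algebraMap ℤ Zab) ≤ Ideal.span {(p : ℤ)} := by
    rw [(RingHom.injective_iff_ker_eq_bot _).mp (algebraMap ℤ Zab).injective_int]
    exact bot_le
  rw [← map_natCast (algebraMap ℤ Zab), ← Set.image_singleton, ← Ideal.map_span, Ne,
    Ideal.map_eq_top_iff_of_ker_le _ hker fun x ↦ Algebra.IsIntegral.isIntegral x,
    Ideal.span_singleton_eq_top]
  exact (Nat.prime_iff_prime_int.mp Fact.out).not_isUnit

theorem ZabMod.nonempty_ringHom_of_finite (p : ℕ) [Fact p.Prime] (K : Type*) [Field K]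
    [Finite K] [Algebra (ZMod p) K] : Nonempty (K →+* ZabMod p) := by
  have := Fintype.ofFinite K
  obtain ⟨ζ, hζ⟩ :=
    Zab.exists_aeval_cyclotomic_eq_zero (Nat.sub_pos_of_lt (Fintype.one_lt_card (α := K)))
  refine FiniteField.nonempty_ringHom_of_aeval_cyclotomic_eq_zero
    (ZMod.castHom (ringChar.dvd (ZabMod.natCast_self p)) _) (ζ := Ideal.Quotient.mk _ ζ) ?_
  rw [← Ideal.Quotient.mkₐ_eq_mk ℤ, aeval_algHom_apply, hζ, map_zero]

end

theorem stmt14_general (p : ℕ) [hp : Fact p.Prime] (n m : ℕ)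
    (f : Fin n → MvPolynomial (Fin m) ℤ) :
    (∃ x : Fin m → ZabMod p, ∀ i : Fin n, MvPolynomial.aeval x (f i) = 0) ↔
    (∃ x : Fin m → AlgebraicClosure (ZMod p), ∀ i : Fin n, MvPolynomial.aeval x (f i) = 0) := by
  constructor
  · exact MvPolynomial.exists_common_zero_of_ringHom
      (Ideal.Quotient.nonempty_ringHom_algebraicClosure_zmod p _ (Zab.span_natCast_ne_top p)
        (Ideal.mem_span_singleton_self _)).some f
  · rintro ⟨x, hx⟩
    obtain ⟨K, _, y, hy⟩ := IntermediateField.exists_finite_common_zero (F := ZMod p) f x hx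
    exact MvPolynomial.exists_common_zero_of_ringHom
      (ZabMod.nonempty_ringHom_of_finite p K).some f ⟨y, hy⟩

/-- Fix a prime `p`, `n, m ≥ 1` and integer polynomials `f i`. The
system `f i = 0` has a solution in `(ℤ^ab/pℤ^ab)^m` iff it has a solution in `𝔽̄_p^m`. -/
theorem stmt14 (p : ℕ) [hp : Fact p.Prime] (n m : ℕ) (hn : 1 ≤ n) (hm : 1 ≤ m)
    (f : Fin n → MvPolynomial (Fin m) ℤ) :
    (∃ x : Fin m → ZabMod p, ∀ i : Fin n, MvPolynomial.aeval x (f i) = 0) ↔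
    (∃ x : Fin m → AlgebraicClosure (ZMod p), ∀ i : Fin n, MvPolynomial.aeval x (f i) = 0) :=
  stmt14_general p (hp := hp) n m f

end
end
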